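/- arXiv:2101.03130 — 5 statements merged into one kernel-verified Lean document; each statement's English description precedes it below -/
import Mathlib

section
/- For every polynomial p in R[X_1,…,X_N], the operator identity (X·X)·Δp = E(E(p)) + (N−2)·E(p) + Σ_{1≤j<k≤N} M_{jk}(M_{jk}(p)) holds, where E = Σ_{j=1}^N X_j ∂/∂X_j is the Euler operator. -/
open MvPolynomial

/-- The rotation generator `M_{jk} p = X_j ∂_k p − X_k ∂_j p`. -/
noncomputable def rot {R : Type*} [CommRing R] {N : ℕ} (j k : Fin N)
    (p : MvPolynomial (Fin N) R) : MvPolynomial (Fin N) R :=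
  X j * pderiv k p - X k * pderiv j p

/-- The Laplacian `Δ p = Σ_j ∂_j² p`. -/
noncomputable def lap {R : Type*} [CommRing R] {N : ℕ}
    (p : MvPolynomial (Fin N) R) : MvPolynomial (Fin N) R :=
  ∑ j, pderiv j (pderiv j p)

/-- The polynomial `X·X = X_1² + ⋯ + X_N²`. -/
noncomputable def XX (R : Type*) [CommRing R] (N : ℕ) : MvPolynomial (Fin N) R :=
  ∑ j, X j ^ 2

/-- The Euler operator `E p = Σ_j X_j ∂_j p`. -/
noncomputable def euler {R : Type*} [CommRing R] {N : ℕ}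
    (p : MvPolynomial (Fin N) R) : MvPolynomial (Fin N) R :=
  ∑ j, X j * pderiv j p

/-!
Expanding with the Leibniz rule, for `j ≠ k`
`M_{jk}² = X_j²∂_k² + X_k²∂_j² − 2X_jX_k∂_j∂_k − X_j∂_j − X_k∂_k = f(j,k) + f(k,j)` with
`f(j,k) = X_j²∂_k² − X_jX_k∂_j∂_k − X_j∂_j`. The sum over `j < k` is therefore the sum of `f`
over all ordered pairs minus its diagonal `−E`, which avoids dividing by 2 in `R`. Together with
`E² = E + Σ_{j,k} X_jX_k∂_j∂_k` and `(X·X)Δ = Σ_{j,k} X_j²∂_k²` the identity is bookkeeping.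
-/

open Finset

theorem pderiv_pderiv_comm {σ R : Type*} [CommSemiring R] (i j : σ) (p : MvPolynomial σ R) :
    pderiv i (pderiv j p) = pderiv j (pderiv i p) := by
  classical
  induction p using MvPolynomial.induction_on with
  | C a => simp
  | add p q hp hq => simp [hp, hq]
  | mul_X p k h =>
    simp only [Derivation.leibniz, pderiv_X, Pi.single_apply, smul_eq_mul, map_add, h]
    split_ifs <;> simp <;> abel

theorem Finset.sum_sum_lt_add_swap_add_sum_diag {ι M : Type*} [Fintype ι] [LinearOrder ι]
    [AddCommMonoid M] (f : ι → ι → M) :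
    ∑ j, ∑ k ∈ univ.filter (j < ·), (f j k + f k j) + ∑ j, f j j = ∑ j, ∑ k, f j k := by
  have hsplit : ∀ j k, f j k =
      (if j < k then f j k else 0) + (if k < j then f j k else 0) + (if j = k then f j k else 0) := by
    intro j k
    rcases lt_trichotomy j k with h | rfl | h
    · simp [h, h.not_gt, h.ne]
    · simp
    · simp [h, h.not_gt, h.ne']
  conv_rhs => enter [2, j, 2, k]; rw [hsplit]
  simp only [sum_add_distrib, sum_filter, sum_ite_eq]
  rw [sum_comm (f := fun j k => if k < j then f j k else 0)]
  simp

section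
variable {R : Type*} [CommRing R] {N : ℕ}

theorem euler_euler (p : MvPolynomial (Fin N) R) :
    euler (euler p) = euler p + ∑ j, ∑ k, X j * X k * pderiv j (pderiv k p) := by
  classical
  simp only [euler, map_sum, Derivation.leibniz, pderiv_X, Pi.single_apply, smul_eq_mul,
    mul_sum, mul_add, mul_ite, mul_one, mul_zero, sum_add_distrib, sum_ite_eq', mem_univ, if_true]
  simp only [mul_assoc]
  exact add_comm _ _

theorem rot_rot {j k : Fin N} (hjk : j ≠ k) (p : MvPolynomial (Fin N) R) :
    rot j k (rot j k p) =
      X j ^ 2 * pderiv k (pderiv k p) + X k ^ 2 * pderiv j (pderiv j p)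
        - 2 * X j * X k * pderiv j (pderiv k p) - X j * pderiv j p - X k * pderiv k p := by
  simp only [rot, map_sub, pderiv_mul, pderiv_X_self, pderiv_X_of_ne hjk, pderiv_X_of_ne hjk.symm,
    pderiv_pderiv_comm k j]
  ring

end

/-- `(X·X)·Δp = E(E(p)) + (N−2)·E(p) + Σ_{j<k} M_{jk}(M_{jk} p)`. -/
theorem stmt0 {R : Type*} [CommRing R] {N : ℕ} (hN : 2 ≤ N)
    (p : MvPolynomial (Fin N) R) :
    XX R N * lap p =
      euler (euler p) + (N - 2) • euler p +
        ∑ j : Fin N, ∑ k ∈ Finset.univ.filter (fun k => j < k),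
          rot j k (rot j k p) := by
  obtain ⟨m, rfl⟩ : ∃ m, N = m + 2 := ⟨N - 2, by omega⟩
  set f : Fin (m + 2) → Fin (m + 2) → MvPolynomial (Fin (m + 2)) R := fun j k =>
    X j ^ 2 * pderiv k (pderiv k p) - X j * X k * pderiv j (pderiv k p) - X j * pderiv j p
  have hpairs := sum_sum_lt_add_swap_add_sum_diag f
  have hrot : ∑ j, ∑ k ∈ univ.filter (j < ·), rot j k (rot j k p) =
      ∑ j, ∑ k ∈ univ.filter (j < ·), (f j k + f k j) :=
    sum_congr rfl fun j _ => sum_congr rfl fun k hk => by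
      rw [rot_rot (mem_filter.mp hk).2.ne]
      simp only [f, pderiv_pderiv_comm k j]
      ring
  have hdiag : ∑ j, f j j = -euler p := by
    rw [euler, ← sum_neg_distrib]
    exact sum_congr rfl fun j _ => by ring
  have hfull : ∑ j, ∑ k, f j k =
      XX R (m + 2) * lap p - ∑ j, ∑ k, X j * X k * pderiv j (pderiv k p) - (m + 2) • euler p := by
    simp only [f, XX, lap, euler, sum_mul_sum, sum_sub_distrib, smul_sum,
      sum_const, card_univ, Fintype.card_fin]
  rw [hdiag, hfull] at hpairs
  rw [Nat.add_sub_cancel, euler_euler, hrot]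
  linear_combination -hpairs
end

section
/- Let R be a field of characteristic 0 and d ≥ 0 an integer. The R-vector space H_{N,d} of homogeneous harmonic polynomials of degree d in R[X_1,…,X_N] (together with 0) has dimension binom(N+d−1, N−1) − binom(N+d−3, N−1), where a binomial coefficient binom(a,b) is taken to be 0 when a < b. -/
open MvPolynomial

/-- The Laplacian as an `R`-linear map. -/
noncomputable def lapLM (R : Type*) [CommRing R] (N : ℕ) :
    MvPolynomial (Fin N) R →ₗ[R] MvPolynomial (Fin N) R :=
  ∑ j : Fin N, ((pderiv j).toLinearMap ∘ₗ (pderiv j).toLinearMap)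

/-!
Write `P n` for the homogeneous polynomials of degree `n`. The Laplacian maps `P n` to zero for
`n < 2` and maps `P (n + 2)` onto `P n`, so by rank–nullity `dim H_{N,n+2} = dim P (n+2) - dim P n`,
with `dim P n = C(N + n - 1, N - 1)` (monomials of degree `n`).

For surjectivity split `Δ = ∂₀² + D`, where `D` is the Laplacian in the other variables, and let
`J` be the double antiderivative in `X₀`. Then `∂₀² J = 1` and `D J = J D`, so the geometric series
gives `Δ (J ∑_{k ≤ n} (-J D)^k) = 1 - (-J D)^(n+1)`, and `(J D)^(n+1) = J^(n+1) D^(n+1)` kills `P n`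
because `D` lowers the degree by two.
-/

theorem add_mul_mul_geom_sum_of_mul_eq_one {S : Type*} [Ring S] {a d j : S} (haj : a * j = 1)
    (hdj : Commute d j) (n : ℕ) :
    (a + d) * (j * ∑ k ∈ Finset.range n, (-(j * d)) ^ k) = 1 - (-(j * d)) ^ n := by
  rw [← mul_assoc, add_mul, haj, hdj.eq, ← sub_neg_eq_add, mul_neg_geom_sum]

theorem Submodule.finrank_map_add_finrank_inf_ker {K V V₂ : Type*} [DivisionRing K]
    [AddCommGroup V] [Module K V] [AddCommGroup V₂] [Module K V₂] (f : V →ₗ[K] V₂)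
    (p : Submodule K V) [FiniteDimensional K p] :
    Module.finrank K (p.map f) + Module.finrank K ↥(p ⊓ LinearMap.ker f) = Module.finrank K p := by
  have h := (f.domRestrict p).finrank_range_add_finrank_ker
  have hker : (LinearMap.ker f).comap p.subtype = (p ⊓ LinearMap.ker f).comap p.subtype := by
    rw [Submodule.comap_inf, Submodule.comap_subtype_self, top_inf_eq]
  rwa [LinearMap.range_domRestrict, LinearMap.ker_domRestrict, hker,
    (Submodule.comapSubtypeEquivOfLe inf_le_left).finrank_eq] at h

namespace MvPolynomial

variable {σ R : Type*}

instance finite_homogeneousSubmodule [Finite σ] [CommSemiring R] (n : ℕ) :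
    Module.Finite R (homogeneousSubmodule σ R n) :=
  Module.Finite.iff_fg.mpr (homogeneousSubmodule_fg σ R n)

theorem finrank_homogeneousSubmodule [Fintype σ] [CommRing R]
    [StrongRankCondition R] (n : ℕ) :
    Module.finrank R (homogeneousSubmodule σ R n) = (Fintype.card σ + n - 1).choose n := by
  classical
  have hset : {d : σ →₀ ℕ | d.degree = n}
      = ((Finset.univ : Finset σ).finsuppAntidiag n : Set (σ →₀ ℕ)) := by
    ext d
    simp [Finsupp.degree_eq_sum]
  rw [homogeneousSubmodule_eq_finsupp_supported, hset,
    (AddMonoidAlgebra.supportedEquivFinsupp _).finrank_eq, Module.finrank_finsupp_self]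
  simp [Finset.card_finsuppAntidiag_nat_eq_choose]

section CommRing

variable [CommRing R] {p : MvPolynomial σ R} {n : ℕ}

theorem IsHomogeneous.linearMap_apply_of_monomial {f : Module.End R (MvPolynomial σ R)} {m : ℕ}
    (hf : ∀ α r, α.degree = m → (f (monomial α r)).IsHomogeneous n)
    (hp : p.IsHomogeneous m) : (f p).IsHomogeneous n := by
  rw [p.as_sum, map_sum]
  refine IsHomogeneous.sum _ _ _ fun α hα => hf α _ ?_
  by_contra h
  exact mem_support_iff.mp hα (hp.coeff_eq_zero h)

theorem pderiv_eq_zero_of_isHomogeneous_zero (i : σ) (hp : p.IsHomogeneous 0) :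
    pderiv i p = 0 := by
  rw [← totalDegree_zero_iff_isHomogeneous, totalDegree_eq_zero_iff_eq_C] at hp
  rw [hp, pderiv_C]

noncomputable def partialLaplacian (s : Finset σ) : Module.End R (MvPolynomial σ R) :=
  ∑ j ∈ s, (pderiv j).toLinearMap * (pderiv j).toLinearMap

theorem partialLaplacian_apply (s : Finset σ) (p : MvPolynomial σ R) :
    partialLaplacian s p = ∑ j ∈ s, pderiv j (pderiv j p) := by
  simp [partialLaplacian]

theorem partialLaplacian_eq_add_erase [DecidableEq σ] {s : Finset σ} {i : σ} (hi : i ∈ s) :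
    partialLaplacian (R := R) s
      = (pderiv i).toLinearMap * (pderiv i).toLinearMap + partialLaplacian (s.erase i) :=
  (Finset.add_sum_erase s _ hi).symm

theorem IsHomogeneous.partialLaplacian (s : Finset σ) (hp : p.IsHomogeneous n) :
    (partialLaplacian s p).IsHomogeneous (n - 2) := by
  rw [partialLaplacian_apply, show n - 2 = n - 1 - 1 by omega]
  exact IsHomogeneous.sum _ _ _ fun j _ => (hp.pderiv).pderiv

theorem partialLaplacian_eq_zero_of_lt_two (s : Finset σ) (hp : p.IsHomogeneous n) (hn : n < 2) :
    partialLaplacian s p = 0 := by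
  rw [partialLaplacian_apply]
  refine Finset.sum_eq_zero fun j _ => pderiv_eq_zero_of_isHomogeneous_zero j ?_
  simpa [show n - 1 = 0 by omega] using hp.pderiv (i := j)

theorem IsHomogeneous.partialLaplacian_pow (s : Finset σ) (hp : p.IsHomogeneous n) (k : ℕ) :
    ((MvPolynomial.partialLaplacian s ^ k) p).IsHomogeneous (n - 2 * k) := by
  induction k with
  | zero => simpa using hp
  | succ k ih =>
    rw [pow_succ', Module.End.mul_apply, show n - 2 * (k + 1) = n - 2 * k - 2 by omega]
    exact ih.partialLaplacian s

theorem partialLaplacian_pow_eq_zero (s : Finset σ) (hp : p.IsHomogeneous n) :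
    (partialLaplacian s ^ (n + 1)) p = 0 := by
  rw [pow_succ', Module.End.mul_apply]
  exact partialLaplacian_eq_zero_of_lt_two s (hp.partialLaplacian_pow s n) (by omega)

end CommRing

section Antiderivative

variable [Field R] {p : MvPolynomial σ R} {n : ℕ}

noncomputable def antideriv (i : σ) : Module.End R (MvPolynomial σ R) :=
  (basisMonomials σ R).constr R fun α => (α i + 1 : R)⁻¹ • monomial (α + Finsupp.single i 1) 1

theorem antideriv_monomial (i : σ) (α : σ →₀ ℕ) (r : R) :
    antideriv i (monomial α r) = (α i + 1 : R)⁻¹ • monomial (α + Finsupp.single i 1) r := by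
  rw [← mul_one r, ← smul_eq_mul, ← smul_monomial, map_smul, antideriv,
    show monomial α (1 : R) = basisMonomials σ R α by rw [coe_basisMonomials],
    Module.Basis.constr_basis, smul_comm, smul_monomial]

theorem pderiv_antideriv [CharZero R] (i : σ) (p : MvPolynomial σ R) :
    pderiv i (antideriv i p) = p := by
  induction p using MvPolynomial.induction_on' with
  | monomial α r =>
    rw [antideriv_monomial, Derivation.map_smul, pderiv_monomial, add_tsub_cancel_right,
      smul_monomial]
    congr 1
    simp only [Finsupp.add_apply, Finsupp.single_eq_same, Nat.cast_add, Nat.cast_one, smul_eq_mul]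
    field_simp
  | add p q hp hq => rw [map_add, map_add, hp, hq]

theorem pderiv_antideriv_of_ne {i j : σ} (hij : i ≠ j) (p : MvPolynomial σ R) :
    pderiv j (antideriv i p) = antideriv i (pderiv j p) := by
  induction p using MvPolynomial.induction_on' with
  | monomial α r =>
    have hshift : α + Finsupp.single i 1 - Finsupp.single j 1
        = α - Finsupp.single j 1 + Finsupp.single i 1 := by
      ext k
      by_cases hki : k = i <;> by_cases hkj : k = j <;>
        simp_all [eq_comm]
    rw [antideriv_monomial, Derivation.map_smul, pderiv_monomial, pderiv_monomial,
      antideriv_monomial, hshift]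
    simp [hij, Ne.symm hij]
  | add p q hp hq => rw [map_add, map_add, map_add, hp, hq, map_add]

theorem commute_pderiv_antideriv {i j : σ} (hij : i ≠ j) :
    Commute (pderiv j).toLinearMap (antideriv (R := R) i) :=
  LinearMap.ext (pderiv_antideriv_of_ne hij)

theorem IsHomogeneous.antideriv (i : σ) (hp : p.IsHomogeneous n) :
    (antideriv i p).IsHomogeneous (n + 1) := by
  refine hp.linearMap_apply_of_monomial fun α r hα => ?_
  rw [antideriv_monomial]
  exact (homogeneousSubmodule σ R (n + 1)).smul_mem _
    (isHomogeneous_monomial r (by simp [hα]))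

theorem commute_partialLaplacian_antideriv [DecidableEq σ] {s : Finset σ} {i : σ} (hi : i ∉ s) :
    Commute (partialLaplacian s) (antideriv (R := R) i) :=
  Commute.sum_left _ _ _ fun j hj =>
    have hij : i ≠ j := fun h => hi (h ▸ hj)
    (commute_pderiv_antideriv hij).mul_left (commute_pderiv_antideriv hij)

end Antiderivative

theorem exists_isHomogeneous_partialLaplacian_eq [Field R] [CharZero R] [DecidableEq σ]
    {s : Finset σ} {i : σ} (hi : i ∈ s) {n : ℕ} {q : MvPolynomial σ R} (hq : q.IsHomogeneous n) :
    ∃ p, p.IsHomogeneous (n + 2) ∧ partialLaplacian s p = q := by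
  set J := antideriv (R := R) i * antideriv i
  set D := partialLaplacian (R := R) (s.erase i)
  have hJ : (pderiv i).toLinearMap * (pderiv i).toLinearMap * J = 1 := by
    refine LinearMap.ext fun p => ?_
    simp [J, pderiv_antideriv]
  have hDJ : Commute D J :=
    have h := commute_partialLaplacian_antideriv (s.notMem_erase i)
    h.mul_right h
  have hJD : ∀ r ∈ homogeneousSubmodule σ R n, (-(J * D)) r ∈ homogeneousSubmodule σ R n := by
    intro r hr
    rcases lt_or_ge n 2 with hn | hn
    · simp [partialLaplacian_eq_zero_of_lt_two _ hr hn, D]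
    · have := ((hr.partialLaplacian (s.erase i)).antideriv i).antideriv i
      rw [show n - 2 + 1 + 1 = n by omega] at this
      exact Submodule.neg_mem _ this
  have hnil : ((-(J * D)) ^ (n + 1)) q = 0 := by
    rw [neg_pow (J * D), hDJ.symm.mul_pow]
    simp [partialLaplacian_pow_eq_zero _ hq, D]
  refine ⟨J (∑ k ∈ Finset.range (n + 1), ((-(J * D)) ^ k) q), ?_, ?_⟩
  · exact ((IsHomogeneous.sum _ _ _ fun k _ =>
      Module.End.pow_apply_mem_of_forall_mem k hJD q hq).antideriv i).antideriv i
  · have key := congrArg (· q) (add_mul_mul_geom_sum_of_mul_eq_one hJ hDJ (n + 1))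
    rw [← partialLaplacian_eq_add_erase hi] at key
    simpa [hnil] using key

theorem map_partialLaplacian_homogeneousSubmodule [Field R] [CharZero R] [DecidableEq σ]
    {s : Finset σ} {i : σ} (hi : i ∈ s) (n : ℕ) :
    (homogeneousSubmodule σ R (n + 2)).map (partialLaplacian s) = homogeneousSubmodule σ R n := by
  refine le_antisymm (Submodule.map_le_iff_le_comap.mpr fun p hp => ?_) fun q hq => ?_
  · simpa using (hp : p.IsHomogeneous (n + 2)).partialLaplacian s
  · obtain ⟨p, hp, rfl⟩ := exists_isHomogeneous_partialLaplacian_eq hi hq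
    exact Submodule.mem_map_of_mem hp

theorem homogeneousSubmodule_le_ker_partialLaplacian [CommRing R] (s : Finset σ) {n : ℕ}
    (hn : n < 2) : homogeneousSubmodule σ R n ≤ LinearMap.ker (partialLaplacian s) :=
  fun _ hp => partialLaplacian_eq_zero_of_lt_two s hp hn

end MvPolynomial

/-- over a field of characteristic 0, the space of homogeneous harmonic
polynomials of degree `d` has dimension `C(N+d−1, N−1) − C(N+d−3, N−1)`. -/
theorem stmt7 {R : Type*} [Field R] [CharZero R] {N : ℕ} (hN : 2 ≤ N) (d : ℕ) :
    Module.finrank R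
      ↥(homogeneousSubmodule (Fin N) R d ⊓ LinearMap.ker (lapLM R N)) =
      Nat.choose (N + d - 1) (N - 1) - Nat.choose (N + d - 3) (N - 1) := by
  have hlap : lapLM R N = partialLaplacian Finset.univ := rfl
  have hdim (n : ℕ) :
      Module.finrank R (homogeneousSubmodule (Fin N) R n) = (N + n - 1).choose (N - 1) := by
    rw [finrank_homogeneousSubmodule, Fintype.card_fin, show N + n - 1 = N - 1 + n by omega,
      Nat.choose_symm_add]
  obtain hd | ⟨n, rfl⟩ : d < 2 ∨ ∃ n, d = n + 2 := by
    rcases lt_or_ge d 2 with hd | hd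
    exacts [.inl hd, .inr ⟨d - 2, by omega⟩]
  · rw [inf_eq_left.mpr (hlap ▸ homogeneousSubmodule_le_ker_partialLaplacian _ hd), hdim,
      Nat.choose_eq_zero_of_lt (by omega : N + d - 3 < N - 1), Nat.sub_zero]
  · have hrank := Submodule.finrank_map_add_finrank_inf_ker (lapLM R N)
      (homogeneousSubmodule (Fin N) R (n + 2))
    rw [hlap, map_partialLaplacian_homogeneousSubmodule (Finset.mem_univ ⟨0, by omega⟩),
      hdim, hdim] at hrank
    rw [hlap, show N + (n + 2) - 3 = N + n - 1 by omega]
    omega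
end

section
/- Let c ∈ R be an element that is not a zero divisor. If p ∈ R[X_1,…,X_N] is homogeneous (of some degree) and p lies in the ideal generated by X·X − c (i.e., p = (X·X − c)·q for some q), then p = 0. Consequently, the quotient map R[X_1,…,X_N] → R[X_1,…,X_N]/(X·X − c) is injective on homogeneous polynomials of any fixed degree. -/
open MvPolynomial

/-!
If `p = (X·X - c) * q` with `q ≠ 0`, compare the extreme homogeneous components of the two
sides. In the top degree `deg q + 2` the component of `p` is `X·X * q_top`, nonzero because
`X·X` is monic of degree 2 in `X₀` over the other variables; in the lowest degree `l` where
`q_l ≠ 0` it is `-c * q_l`, nonzero because `c` is not a zero divisor. As `l ≤ deg q`, the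
polynomial `p` has nonzero components in two different degrees, so it is not homogeneous.
-/

open scoped nonZeroDivisors

namespace MvPolynomial

variable {σ R : Type*}

section CommSemiring

variable [CommSemiring R]

attribute [local instance] gradedAlgebra in
theorem homogeneousComponent_mul_of_isHomogeneous_left {a : MvPolynomial σ R} {i : ℕ}
    (ha : a.IsHomogeneous i) (b : MvPolynomial σ R) (n : ℕ) :
    homogeneousComponent n (a * b) =
      if i ≤ n then a * homogeneousComponent (n - i) b else 0 := by
  simpa only [← DirectSum.Decomposition.decompose'_eq, decomposition.decompose'_apply] using
    DirectSum.coe_decompose_mul_of_left_mem (homogeneousSubmodule σ R) (b := b) n ha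

theorem homogeneousComponent_totalDegree_ne_zero {p : MvPolynomial σ R} (hp : p ≠ 0) :
    homogeneousComponent p.totalDegree p ≠ 0 := by
  obtain ⟨s, hs, hdeg⟩ := Finset.exists_mem_eq_sup p.support (support_nonempty.mpr hp)
    fun s => s.sum fun _ e => e
  intro h
  have := congrArg (coeff s) h
  rw [coeff_homogeneousComponent, if_pos (by rw [totalDegree, hdeg]; rfl)] at this
  exact mem_support_iff.mp hs this

theorem IsHomogeneous.eq_of_homogeneousComponent_ne_zero {p : MvPolynomial σ R} {d e : ℕ}
    (hp : p.IsHomogeneous d) (he : homogeneousComponent e p ≠ 0) : e = d := by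
  rw [homogeneousComponent_of_mem ((mem_homogeneousSubmodule d p).mpr hp)] at he
  exact (Ne.ite_ne_right_iff fun h => he (by simp [h])).mp he

theorem C_mem_nonZeroDivisors {c : R} (hc : c ∈ R⁰) :
    (C c : MvPolynomial σ R) ∈ (MvPolynomial σ R)⁰ := by
  rw [mem_nonZeroDivisors_iff_left]
  intro a h
  ext s
  simpa [coeff_C_mul, mul_left_mem_nonZeroDivisors_eq_zero_iff hc] using congrArg (coeff s) h

end CommSemiring

theorem IsHomogeneous.eq_zero_of_mem_span_sub_C [CommRing R] {p r : MvPolynomial σ R} {d k : ℕ}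
    (hp : p.IsHomogeneous d) (hr : r ∈ (MvPolynomial σ R)⁰) (hrk : r.IsHomogeneous k) (hk : k ≠ 0)
    {c : R} (hc : c ∈ R⁰) (hmem : p ∈ Ideal.span {r - C c}) :
    p = 0 := by
  classical
  obtain ⟨q, rfl⟩ := Ideal.mem_span_singleton.mp hmem
  by_contra hp0
  have hq : q ≠ 0 := right_ne_zero_of_mul hp0
  have component (e : ℕ) : homogeneousComponent e ((r - C c) * q) =
      (if k ≤ e then r * homogeneousComponent (e - k) q else 0) -
        C c * homogeneousComponent e q := by
    rw [sub_mul, map_sub, homogeneousComponent_mul_of_isHomogeneous_left hrk,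
      homogeneousComponent_C_mul]
  have top : homogeneousComponent (q.totalDegree + k) ((r - C c) * q) ≠ 0 := by
    rw [component, if_pos (Nat.le_add_left k _), Nat.add_sub_cancel,
      homogeneousComponent_eq_zero (q.totalDegree + k) q (by omega), mul_zero, sub_zero]
    exact (mul_left_mem_nonZeroDivisors_eq_zero_iff hr).not.mpr
      (homogeneousComponent_totalDegree_ne_zero hq)
  have hex : ∃ l, homogeneousComponent l q ≠ 0 :=
    ⟨_, homogeneousComponent_totalDegree_ne_zero hq⟩
  have bottom : homogeneousComponent (Nat.find hex) ((r - C c) * q) ≠ 0 := by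
    have below : (if k ≤ Nat.find hex then r * homogeneousComponent (Nat.find hex - k) q
        else 0) = 0 := by
      split_ifs
      · rw [not_not.mp (Nat.find_min hex (by omega)), mul_zero]
      · rfl
    rw [component, below, zero_sub, neg_ne_zero]
    exact (mul_left_mem_nonZeroDivisors_eq_zero_iff (C_mem_nonZeroDivisors hc)).not.mpr
      (Nat.find_spec hex)
  have bottom_le_top : Nat.find hex ≤ q.totalDegree :=
    not_lt.mp fun h => Nat.find_spec hex (homogeneousComponent_eq_zero _ q h)
  have top_eq := hp.eq_of_homogeneousComponent_ne_zero top
  have bottom_eq := hp.eq_of_homogeneousComponent_ne_zero bottom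
  omega

end MvPolynomial

theorem XX_isHomogeneous (R : Type*) [CommRing R] (N : ℕ) : (XX R N).IsHomogeneous 2 :=
  IsHomogeneous.sum _ _ _ fun j _ => isHomogeneous_X_pow j 2

theorem XX_mem_nonZeroDivisors (R : Type*) [CommRing R] {N : ℕ} (hN : N ≠ 0) :
    XX R N ∈ (MvPolynomial (Fin N) R)⁰ := by
  obtain ⟨n, rfl⟩ := Nat.exists_eq_succ_of_ne_zero hN
  refine mem_nonZeroDivisors_of_injective (finSuccEquiv R n).injective ?_
  have : finSuccEquiv R n (XX R (n + 1)) =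
      Polynomial.X ^ 2 + Polynomial.C (∑ j : Fin n, X j ^ 2) := by
    simp [XX, Fin.sum_univ_succ, finSuccEquiv_X_zero, finSuccEquiv_X_succ]
  rw [this]
  exact (Polynomial.monic_X_pow_add
    (Polynomial.degree_C_le.trans_lt (by norm_num))).mem_nonZeroDivisors

/-- if `c` is not a zero divisor, the only homogeneous polynomial in the
ideal generated by `X·X − c` is `0`; consequently the quotient map is injective on
homogeneous polynomials of any fixed degree. -/
theorem stmt9 {R : Type*} [CommRing R] {N : ℕ} (hN : 2 ≤ N)
    (c : R) (hc : c ∈ nonZeroDivisors R) :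
    (∀ (d : ℕ) (p : MvPolynomial (Fin N) R), p.IsHomogeneous d →
      p ∈ Ideal.span {XX R N - C c} → p = 0) ∧
    (∀ (d : ℕ) (p₁ p₂ : MvPolynomial (Fin N) R),
      p₁.IsHomogeneous d → p₂.IsHomogeneous d →
      Ideal.Quotient.mk (Ideal.span {XX R N - C c}) p₁ =
        Ideal.Quotient.mk (Ideal.span {XX R N - C c}) p₂ →
      p₁ = p₂) := by
  have eq_zero (d : ℕ) (p : MvPolynomial (Fin N) R) (hp : p.IsHomogeneous d)
      (hmem : p ∈ Ideal.span {XX R N - C c}) : p = 0 :=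
    hp.eq_zero_of_mem_span_sub_C (XX_mem_nonZeroDivisors R (by omega)) (XX_isHomogeneous R N)
      two_ne_zero hc hmem
  refine ⟨eq_zero, fun d p₁ p₂ h₁ h₂ h => ?_⟩
  exact sub_eq_zero.mp (eq_zero d _ (h₁.sub h₂) (Ideal.Quotient.eq.mp h))
end

section
/- Let m ≥ 2 and let c_1,…,c_m be distinct elements of R such that for all i ≠ j the difference c_i − c_j is not a zero divisor in R. If p ∈ R[X_1,…,X_N] is divisible by X·X − c_j for each j = 1,…,m, then p is divisible by the product Π_{j=1}^m (X·X − c_j). -/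
open MvPolynomial

/-! Expanding in `X_0`, `X·X − c = X_0² + (X_1² + ⋯ − c)` is monic over the remaining
variables, so division with remainder by it is `R`-linear and multiplication by a
non-zero-divisor `d` of `R` stays injective modulo `X·X − c`. Since
`X·X − c_i ≡ c_j − c_i` modulo `X·X − c_j`, each `X·X − c_j` therefore divides the cofactor
`p / (X·X − c_i)`, and induction over the factors gives the product. -/

open nonZeroDivisors

theorem Finset.prod_dvd_of_forall_dvd_of_cancel {M ι : Type*} [CommMonoid M] {s : Finset ι}
    {f : ι → M} {a : M} (hdvd : ∀ i ∈ s, f i ∣ a)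
    (hcancel : ∀ i ∈ s, ∀ j ∈ s, i ≠ j → ∀ r, f i ∣ f j * r → f i ∣ r) :
    ∏ i ∈ s, f i ∣ a := by
  classical
  induction s using Finset.induction_on generalizing a with
  | empty => exact one_dvd a
  | insert j s hj ih =>
    obtain ⟨r, rfl⟩ := hdvd j (mem_insert_self j s)
    rw [prod_insert hj]
    refine mul_dvd_mul_left _ (ih (fun i hi ↦ ?_) ?_)
    · exact hcancel i (mem_insert_of_mem hi) j (mem_insert_self j s) (ne_of_mem_of_not_mem hi hj)
        r (hdvd i (mem_insert_of_mem hi))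
    · exact fun i hi k hk ↦ hcancel i (mem_insert_of_mem hi) k (mem_insert_of_mem hk)

theorem Polynomial.Monic.dvd_of_dvd_smul {S : Type*} [CommRing S] {f q : Polynomial S}
    (hf : f.Monic) {d : S} (hd : IsSMulRegular S d) (h : f ∣ d • q) : f ∣ q := by
  rw [← Polynomial.modByMonic_eq_zero_iff_dvd hf] at h ⊢
  rw [Polynomial.smul_modByMonic] at h
  exact hd.polynomial (h.trans (smul_zero d).symm)

theorem MvPolynomial.isSMulRegular_C {R σ : Type*} [CommRing R] {d : R} (hd : d ∈ R⁰) :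
    IsSMulRegular (MvPolynomial σ R) (C d : MvPolynomial σ R) := by
  intro x y h
  ext m
  have hm := congrArg (coeff m) h
  simp only [smul_eq_mul, coeff_C_mul] at hm
  exact (isRegular_iff_mem_nonZeroDivisors.mpr hd).left hm

theorem MvPolynomial.finSuccEquiv_C {R : Type*} [CommRing R] (n : ℕ) (r : R) :
    finSuccEquiv R n (C r) = Polynomial.C (C r) := by
  simp [finSuccEquiv_apply]

theorem finSuccEquiv_XX (R : Type*) [CommRing R] (n : ℕ) :
    finSuccEquiv R n (XX R (n + 1)) = Polynomial.X ^ 2 + Polynomial.C (XX R n) := by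
  simp only [XX, Fin.sum_univ_succ, map_add, map_sum, map_pow, finSuccEquiv_X_zero,
    finSuccEquiv_X_succ]

theorem XX_sub_C_dvd_of_dvd_C_mul {R : Type*} [CommRing R] {n : ℕ} {c d : R} (hd : d ∈ R⁰)
    {q : MvPolynomial (Fin (n + 1)) R} (h : XX R (n + 1) - C c ∣ C d * q) :
    XX R (n + 1) - C c ∣ q := by
  set e := finSuccEquiv R n
  have he : e (XX R (n + 1) - C c) = Polynomial.X ^ 2 + Polynomial.C (XX R n - C c) := by
    rw [map_sub, finSuccEquiv_XX, finSuccEquiv_C, Polynomial.C_sub, add_sub_assoc]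
  have hmonic : (e (XX R (n + 1) - C c)).Monic := he ▸ Polynomial.monic_X_pow_add_C _ two_ne_zero
  have hsmul : e (C d * q) = (C d : MvPolynomial (Fin n) R) • e q := by
    rw [map_mul, finSuccEquiv_C, Polynomial.smul_eq_C_mul]
  refine (map_dvd_iff e).mp (hmonic.dvd_of_dvd_smul (isSMulRegular_C hd) ?_)
  exact hsmul ▸ map_dvd e h

theorem XX_sub_C_dvd_of_dvd_XX_sub_C_mul {R : Type*} [CommRing R] {n : ℕ} {c c' : R}
    (hc : c - c' ∈ R⁰) {r : MvPolynomial (Fin (n + 1)) R}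
    (h : XX R (n + 1) - C c ∣ (XX R (n + 1) - C c') * r) : XX R (n + 1) - C c ∣ r := by
  refine XX_sub_C_dvd_of_dvd_C_mul hc ?_
  have hdiff : C (c - c') * r = (XX R (n + 1) - C c') * r - (XX R (n + 1) - C c) * r := by
    rw [C_sub]; ring
  exact hdiff ▸ dvd_sub h (dvd_mul_right _ _)

theorem stmt12_general {R : Type*} [CommRing R] {N : ℕ} (hN : 2 ≤ N)
    (m : ℕ) (c : Fin m → R)
    (hdiff : ∀ i j : Fin m, i ≠ j → c i - c j ∈ nonZeroDivisors R)
    (p : MvPolynomial (Fin N) R)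
    (hdvd : ∀ j : Fin m, (XX R N - C (c j)) ∣ p) :
    (∏ j : Fin m, (XX R N - C (c j))) ∣ p := by
  obtain ⟨n, rfl⟩ : ∃ n, N = n + 1 := ⟨N - 1, by omega⟩
  exact Finset.prod_dvd_of_forall_dvd_of_cancel (fun j _ ↦ hdvd j)
    fun i _ j _ hij _ ↦ XX_sub_C_dvd_of_dvd_XX_sub_C_mul (hdiff i j hij)

/-- if `c_1,…,c_m` (`m ≥ 2`) are distinct with no difference `c_i − c_j`
a zero divisor, and `X·X − c_j` divides `p` for each `j`, then `Π_j (X·X − c_j)`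
divides `p`. -/
theorem stmt12 {R : Type*} [CommRing R] {N : ℕ} (hN : 2 ≤ N)
    (m : ℕ) (hm : 2 ≤ m) (c : Fin m → R)
    (hdist : Function.Injective c)
    (hdiff : ∀ i j : Fin m, i ≠ j → c i - c j ∈ nonZeroDivisors R)
    (p : MvPolynomial (Fin N) R)
    (hdvd : ∀ j : Fin m, (XX R N - C (c j)) ∣ p) :
    (∏ j : Fin m, (XX R N - C (c j))) ∣ p :=
  stmt12_general hN m c hdiff p hdvd
end

section
/- Suppose R contains ℚ (R is a ℚ-algebra) and let λ : R[X_1,…,X_N] → R be an R-linear map such that λ(M_{jk}(p)) = 0 for all pairs of distinct indices j, k ∈ {1,…,N} and all p, and λ((X·X)^n) = 1 for every integer n ≥ 0. If p ∈ R[X_1,…,X_N] is harmonic (Δp = 0), then λ(p) equals the value of p at the origin, i.e., λ(p) is the constant coefficient of p. -/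
/-!
With `E = ∑ₖ Xₖ ∂ₖ` the Euler operator, a direct computation gives
`∑_{j,k} M_{jk}(Xₖ ∂ⱼ q) = E² q + (N - 2) E q - (X·X) Δq`. For `q` homogeneous of degree
`d + 1` the right-hand side is `(d + 1)(N + d - 1) q - (X·X) Δq`, so when `q` is harmonic,
rotation invariance gives `(d + 1)(N + d - 1) λ(q) = 0`, and `λ(q) = 0` since this factor is a
nonzero rational. The Laplacian lowers the degree by exactly two, so the homogeneous components
of a harmonic polynomial are harmonic; hence `λ` only sees the constant term, and `λ(1) = 1`.
-/

open MvPolynomial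

namespace MvPolynomial

variable {σ R : Type*} [CommSemiring R]

theorem homogeneousComponent_pderiv (n : ℕ) (i : σ) (p : MvPolynomial σ R) :
    homogeneousComponent n (pderiv i p) = pderiv i (homogeneousComponent (n + 1) p) := by
  ext m
  simp only [coeff_homogeneousComponent, coeff_pderiv, map_add, Finsupp.degree_single,
    Nat.add_right_cancel_iff, ite_mul, zero_mul]

theorem pderiv_homogeneousComponent_zero (i : σ) (p : MvPolynomial σ R) :
    pderiv i (homogeneousComponent 0 p) = 0 := by
  rw [homogeneousComponent_zero, pderiv_C]

end MvPolynomial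

section Rotations

variable {R : Type*} [CommRing R] {N : ℕ}

theorem rot_self (j : Fin N) (p : MvPolynomial (Fin N) R) : rot j j p = 0 :=
  sub_self _

theorem homogeneousComponent_lap (n : ℕ) (p : MvPolynomial (Fin N) R) :
    homogeneousComponent n (lap p) = lap (homogeneousComponent (n + 2) p) := by
  simp only [lap, map_sum, homogeneousComponent_pderiv]

theorem lap_homogeneousComponent_eq_zero {p : MvPolynomial (Fin N) R} (hp : lap p = 0) :
    ∀ n, lap (homogeneousComponent n p) = 0
  | 0 => by simp only [lap, pderiv_homogeneousComponent_zero, map_zero, Finset.sum_const_zero]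
  | 1 => by
    simp only [lap, ← homogeneousComponent_pderiv, pderiv_homogeneousComponent_zero,
      Finset.sum_const_zero]
  | n + 2 => by rw [← homogeneousComponent_lap, hp, map_zero]

theorem sum_rot_X_mul (j : Fin N) (w : MvPolynomial (Fin N) R) :
    ∑ k, rot j k (X k * w) =
      X j * ∑ k, X k * pderiv k w + ((N : R) - 1) • (X j * w) - XX R N * pderiv j w := by
  have hterm : ∀ k, rot j k (X k * w) =
      X j * w + X j * (X k * pderiv k w) - (if k = j then X j * w else 0) -
        X k ^ 2 * pderiv j w := by
    intro k
    rw [rot, pderiv_mul, pderiv_mul, pderiv_X_self]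
    rcases eq_or_ne k j with rfl | hkj
    · rw [if_pos rfl, pderiv_X_self]; ring
    · rw [if_neg hkj, pderiv_X_of_ne hkj]; ring
  simp only [hterm, Finset.sum_sub_distrib, Finset.sum_add_distrib, Finset.sum_const,
    Finset.card_univ, Fintype.card_fin, Finset.sum_ite_eq', Finset.mem_univ, if_true,
    ← Finset.mul_sum, XX, Finset.sum_mul]
  rw [sub_smul, one_smul, Nat.cast_smul_eq_nsmul]
  ring

theorem sum_sum_rot_X_mul_pderiv {q : MvPolynomial (Fin N) R} {d : ℕ}
    (hq : q.IsHomogeneous (d + 1)) :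
    ∑ j, ∑ k, rot j k (X k * pderiv j q) =
      (((d : R) + 1) * (N + d - 1)) • q - XX R N * lap q := by
  have heuler_pderiv : ∀ j, ∑ k, X k * pderiv k (pderiv j q) = (d : R) • pderiv j q := by
    intro j
    rw [(hq.pderiv (i := j)).sum_X_mul_pderiv, Nat.add_sub_cancel, Nat.cast_smul_eq_nsmul]
  have heuler : ∑ j, X j * pderiv j q = ((d : R) + 1) • q := by
    rw [hq.sum_X_mul_pderiv, ← Nat.cast_smul_eq_nsmul R, Nat.cast_succ]
  simp only [sum_rot_X_mul, heuler_pderiv, mul_smul_comm, Finset.sum_sub_distrib,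
    Finset.sum_add_distrib, ← Finset.smul_sum, heuler, lap, Finset.mul_sum]
  module

theorem map_eq_zero_of_isHomogeneous_of_lap_eq_zero [Algebra ℚ R] {M : Type*} [AddCommGroup M]
    [Module R M] (hN : 2 ≤ N) (lam : MvPolynomial (Fin N) R →ₗ[R] M)
    (hrot : ∀ (j k : Fin N), j ≠ k → ∀ p, lam (rot j k p) = 0)
    {q : MvPolynomial (Fin N) R} {d : ℕ} (hq : q.IsHomogeneous (d + 1)) (hlap : lap q = 0) :
    lam q = 0 := by
  have hsum : lam (∑ j, ∑ k, rot j k (X k * pderiv j q)) = 0 := by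
    simp only [map_sum]
    refine Finset.sum_eq_zero fun j _ => Finset.sum_eq_zero fun k _ => ?_
    rcases eq_or_ne j k with rfl | hjk
    · rw [rot_self, map_zero]
    · exact hrot j k hjk _
  rw [sum_sum_rot_X_mul_pderiv hq, hlap, mul_zero, sub_zero, map_smul] at hsum
  have hunit : IsUnit (((d : R) + 1) * (N + d - 1)) := by
    have hQ : ((d : ℚ) + 1) * (N + d - 1) ≠ 0 := by
      have : (2 : ℚ) ≤ N := by exact_mod_cast hN
      have : (0 : ℚ) ≤ d := d.cast_nonneg
      exact mul_ne_zero (by linarith) (by linarith)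
    simpa using (isUnit_iff_ne_zero.mpr hQ).map (algebraMap ℚ R)
  exact hunit.smul_eq_zero.mp hsum

end Rotations

/-- the normalized spherical mean of a harmonic polynomial is its
constant coefficient (its value at the origin). -/
theorem stmt16 {R : Type*} [CommRing R] [Algebra ℚ R] {N : ℕ} (hN : 2 ≤ N)
    (lam : MvPolynomial (Fin N) R →ₗ[R] R)
    (hrot : ∀ (j k : Fin N), j ≠ k → ∀ p, lam (rot j k p) = 0)
    (hone : ∀ n : ℕ, lam (XX R N ^ n) = 1)
    (p : MvPolynomial (Fin N) R) (hharm : lap p = 0) :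
    lam p = constantCoeff p := by
  have hpos : ∀ d, lam (homogeneousComponent (d + 1) p) = 0 := fun d =>
    map_eq_zero_of_isHomogeneous_of_lap_eq_zero hN lam hrot
      (homogeneousComponent_isHomogeneous _ p) (lap_homogeneousComponent_eq_zero hharm _)
  have hlam1 : lam 1 = 1 := by simpa using hone 0
  calc lam p = ∑ i ∈ Finset.range (p.totalDegree + 1), lam (homogeneousComponent i p) := by
        rw [← map_sum, sum_homogeneousComponent]
    _ = lam (homogeneousComponent 0 p) := by
        rw [Finset.sum_range_succ', Finset.sum_eq_zero fun d _ => hpos d, zero_add]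
    _ = constantCoeff p := by
        rw [homogeneousComponent_zero, C_eq_smul_one, map_smul, hlam1, smul_eq_mul, mul_one,
          constantCoeff_eq]
end
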